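/- arXiv:2311.10014 — 4 statements merged into one kernel-verified Lean document; each statement's English description precedes it below -/
import Mathlib

section
/- Let G be a multigraph in which every vertex has degree at most Δ, and let x, y be vertices of G with d_G(x,y) = t ≥ 1. Then the number of shortest paths between x and y satisfies n_G(x,y) ≤ Δ · (⌊Δ/2⌋ · ⌈Δ/2⌉)^((t-1)/2). (If t-1 is odd, interpret the bound as Δ · (⌊Δ/2⌋·⌈Δ/2⌉)^((t-1)/2) with real exponent, or equivalently n_G(x,y)^2 ≤ Δ^2 · (⌊Δ/2⌋·⌈Δ/2⌉)^(t-1).) -/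
/-- A multigraph on vertex type `V` with edge type `E`: each edge has an
unordered pair of endpoints (parallel edges and loops are allowed). -/
structure Multigraph (V : Type) (E : Type) where
  ends : E → Sym2 V

namespace Multigraph

variable {V E : Type}

/-- A walk of length `n` from `x` to `y` in a multigraph, recorded by its
sequence of vertices and edges. -/
@[ext]
structure Walk (G : Multigraph V E) (x y : V) (n : ℕ) where
  vert : Fin (n + 1) → V
  edge : Fin n → E
  vert_zero : vert 0 = x
  vert_last : vert (Fin.last n) = y
  ends_eq : ∀ i : Fin n, G.ends (edge i) = s(vert i.castSucc, vert i.succ)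

/-- The graph distance between two vertices (junk value `0` by `sInf` of `∅`
if they are not connected). -/
noncomputable def dist (G : Multigraph V E) (x y : V) : ℕ :=
  sInf {n | Nonempty (G.Walk x y n)}

/-- The degree of a vertex: the number of edges incident to it. -/
noncomputable def degree (G : Multigraph V E) (v : V) : ℕ :=
  Nat.card {e : E // v ∈ G.ends e}

/-- The number of shortest paths between `x` and `y`: the number of walks
whose length is the distance (such walks are automatically paths). -/
noncomputable def numShortestPaths (G : Multigraph V E) (x y : V) : ℕ :=
  Nat.card (G.Walk x y (G.dist x y))

/-- Distance from a vertex to an edge: the least distance to an endpoint. -/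
noncomputable def distToEdge (G : Multigraph V E) (x : V) (e : E) : ℕ :=
  sInf {d | ∃ v ∈ G.ends e, G.dist x v = d}

noncomputable instance {G : Multigraph V E} {x y : V} {n : ℕ} [Fintype V] [Fintype E] :
    Fintype (G.Walk x y n) := by
  classical
  exact Fintype.ofInjective (fun w => (w.vert, w.edge)) (fun a b h => by
    cases a; cases b; simp_all)

end Multigraph

/-! ### Auxiliary development -/

set_option linter.unusedSectionVars false

namespace Multigraph

variable {V E : Type} {G : Multigraph V E}

def Walk.cons {n : ℕ} {u y : V} (v : V) (e : E) (h : G.ends e = s(v, u))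
    (w : G.Walk u y n) : G.Walk v y (n + 1) where
  vert := Fin.cases v w.vert
  edge := Fin.cases e w.edge
  vert_zero := Fin.cases_zero ..
  vert_last := by
    show Fin.cases v w.vert (Fin.last (n + 1)) = y
    have h1 : Fin.last (n + 1) = (Fin.last n).succ := rfl
    rw [h1, Fin.cases_succ, w.vert_last]
  ends_eq := by
    intro i
    show G.ends (Fin.cases e w.edge i) =
      s(Fin.cases v w.vert i.castSucc, Fin.cases v w.vert i.succ)
    induction i using Fin.cases with
    | zero =>
      rw [Fin.castSucc_zero, Fin.cases_zero, Fin.cases_zero, Fin.cases_succ, w.vert_zero, h]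
    | succ j =>
      rw [Fin.cases_succ, ← Fin.succ_castSucc, Fin.cases_succ, Fin.cases_succ, w.ends_eq j]

def Walk.tail {n : ℕ} {x y u : V} (w : G.Walk x y (n + 1)) (h : w.vert 1 = u) :
    G.Walk u y n where
  vert i := w.vert i.succ
  edge i := w.edge i.succ
  vert_zero := by show w.vert (Fin.succ 0) = u; rw [Fin.succ_zero_eq_one, h]
  vert_last := by
    show w.vert (Fin.last n).succ = y
    have h1 : (Fin.last n).succ = Fin.last (n + 1) := rfl
    rw [h1, w.vert_last]
  ends_eq := by
    intro i
    show G.ends (w.edge i.succ) = s(w.vert i.castSucc.succ, w.vert i.succ.succ)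
    rw [Fin.succ_castSucc]
    exact w.ends_eq i.succ

noncomputable def unconsEquiv (v y u : V) (n : ℕ) :
    {w : G.Walk v y (n + 1) // w.vert 1 = u} ≃
      {e : E // G.ends e = s(v, u)} × G.Walk u y n where
  toFun w := (⟨w.1.edge 0, by
      have := w.1.ends_eq 0
      rwa [Fin.castSucc_zero, w.1.vert_zero, Fin.succ_zero_eq_one, w.2] at this⟩,
    w.1.tail w.2)
  invFun p := ⟨Walk.cons v p.1.1 p.1.2 p.2, by
    show Fin.cases v p.2.vert 1 = u
    rw [← Fin.succ_zero_eq_one, Fin.cases_succ, p.2.vert_zero]⟩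
  left_inv w := by
    apply Subtype.ext
    ext i
    · show Fin.cases v ((w.1.tail w.2).vert) i = w.1.vert i
      induction i using Fin.cases with
      | zero => rw [Fin.cases_zero, w.1.vert_zero]
      | succ j => rw [Fin.cases_succ]; rfl
    · show Fin.cases (w.1.edge 0) ((w.1.tail w.2).edge) i = w.1.edge i
      induction i using Fin.cases with
      | zero => rw [Fin.cases_zero]
      | succ j => rw [Fin.cases_succ]; rfl
  right_inv p := by
    obtain ⟨⟨e, he⟩, w⟩ := p
    refine Prod.ext (Subtype.ext ?_) ?_
    · show Fin.cases e w.edge 0 = e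
      rw [Fin.cases_zero]
    · ext i
      · show Fin.cases v w.vert i.succ = w.vert i
        rw [Fin.cases_succ]
      · show Fin.cases e w.edge i.succ = w.edge i
        rw [Fin.cases_succ]

section Counting

variable [Fintype V] [Fintype E]

/-- number of edges between `v` and `u`. -/
noncomputable def ecnt (G : Multigraph V E) (v u : V) : ℕ :=
  Nat.card {e : E // G.ends e = s(v, u)}

/-- number of geodesics from `v` to `y`. -/
noncomputable def geo (G : Multigraph V E) (y v : V) : ℕ :=
  Nat.card (G.Walk v y (G.dist v y))

open Classical in
/-- vertices at distance `s` from `y`. -/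
noncomputable def layer (G : Multigraph V E) (y : V) (s : ℕ) : Finset V :=
  Finset.univ.filter (fun v => G.dist v y = s)

/-- number of edges from `v` to the next layer (away from `y`). -/
noncomputable def dwn (G : Multigraph V E) (y v : V) : ℕ :=
  ∑ u ∈ layer G y (G.dist v y + 1), ecnt G v u

noncomputable def Bq (G : Multigraph V E) (y : V) (s : ℕ) : ℕ :=
  ∑ v ∈ layer G y s, dwn G y v * geo G y v ^ 2

lemma mem_layer {y v : V} {s : ℕ} : v ∈ layer G y s ↔ G.dist v y = s := by
  simp [layer]

lemma ecnt_symm (v u : V) : ecnt G v u = ecnt G u v :=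
  Nat.card_congr (Equiv.subtypeEquivRight (fun e => by rw [Sym2.eq_swap]))

lemma sum_ecnt_le_degree (T : Finset V) (v : V) : ∑ u ∈ T, ecnt G v u ≤ G.degree v := by
  classical
  have hc : ∀ u, ecnt G v u = (Finset.univ.filter (fun e => G.ends e = s(v, u))).card := by
    intro u
    rw [ecnt, Nat.card_eq_fintype_card, Fintype.card_subtype]
  calc ∑ u ∈ T, ecnt G v u
      = ∑ u ∈ T, (Finset.univ.filter (fun e => G.ends e = s(v, u))).card := by
        exact Finset.sum_congr rfl fun u _ => hc u
    _ = (T.biUnion (fun u => Finset.univ.filter (fun e => G.ends e = s(v, u)))).card := by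
        rw [Finset.card_biUnion]
        intro a _ b _ hab
        simp only [Finset.disjoint_left, Finset.mem_filter]
        rintro e ⟨-, ha⟩ ⟨-, hb⟩
        exact hab (Sym2.congr_right.mp (ha.symm.trans hb))
    _ ≤ (Finset.univ.filter (fun e => v ∈ G.ends e)).card := by
        apply Finset.card_le_card
        intro e he
        simp only [Finset.mem_biUnion, Finset.mem_filter] at he ⊢
        obtain ⟨u, -, -, h⟩ := he
        exact ⟨Finset.mem_univ _, h ▸ Sym2.mem_mk_left v u⟩
    _ = G.degree v := by
        rw [degree, Nat.card_eq_fintype_card, Fintype.card_subtype]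

lemma dist_le_of_walk {x y : V} {n : ℕ} (w : G.Walk x y n) : G.dist x y ≤ n :=
  Nat.sInf_le ⟨w⟩

lemma exists_geodesic {x y : V} {n : ℕ} (w : G.Walk x y n) :
    Nonempty (G.Walk x y (G.dist x y)) :=
  Nat.sInf_mem (⟨n, ⟨w⟩⟩ : Set.Nonempty {n | Nonempty (G.Walk x y n)})

lemma card_walk_succ (v y : V) (n : ℕ) :
    Nat.card (G.Walk v y (n + 1)) =
      ∑ u : V, ecnt G v u * Nat.card (G.Walk u y n) := by
  classical
  rw [← Nat.card_congr (Equiv.sigmaFiberEquiv (fun w : G.Walk v y (n + 1) => w.vert 1))]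
  rw [Nat.card_eq_fintype_card, Fintype.card_sigma]
  refine Finset.sum_congr rfl fun u _ => ?_
  rw [Fintype.card_congr (unconsEquiv v y u n), Fintype.card_prod, ecnt,
    Nat.card_eq_fintype_card, Nat.card_eq_fintype_card]

/-- the geodesic-count recursion. -/
lemma geo_succ {v y : V} {s : ℕ} (hv : G.dist v y = s + 1) :
    geo G y v = ∑ u ∈ layer G y s, ecnt G v u * geo G y u := by
  classical
  have h0 : geo G y v = ∑ u : V, ecnt G v u * Nat.card (G.Walk u y s) := by
    rw [geo, hv, card_walk_succ]
  rw [h0]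
  rw [← Finset.sum_subset (Finset.subset_univ (layer G y s))]
  · refine Finset.sum_congr rfl fun u hu => ?_
    rw [geo, mem_layer.mp hu]
  · intro u _ hu
    rw [mem_layer] at hu
    by_contra hne
    have hcw : Nat.card (G.Walk u y s) ≠ 0 := fun h => hne (by rw [h, mul_zero])
    have hce : ecnt G v u ≠ 0 := fun h => hne (by rw [h, zero_mul])
    have hwne : Nonempty (G.Walk u y s) :=
      (Nat.card_ne_zero.mp hcw).1
    have hene : Nonempty {e : E // G.ends e = s(v, u)} :=
      (Nat.card_ne_zero.mp hce).1
    obtain ⟨w⟩ := hwne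
    obtain ⟨e, he⟩ := hene
    have hdu : G.dist u y ≤ s := dist_le_of_walk w
    have hdu' : G.dist u y < s := lt_of_le_of_ne hdu hu
    obtain ⟨w0⟩ := exists_geodesic w
    have : G.dist v y ≤ G.dist u y + 1 := dist_le_of_walk (w0.cons v e he)
    omega


/-- balanced product bound. -/
lemma prod_le_floor_ceil {a b Δ : ℕ} (h : a + b ≤ Δ) :
    a * b ≤ Δ / 2 * ((Δ + 1) / 2) := by
  have h1 : a * b ≤ (a + b) / 2 * ((a + b + 1) / 2) := by
    set n := a + b with hn
    set q := n / 2 with hq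
    set r := n % 2 with hr
    have h2 : n = 2 * q + r ∧ r ≤ 1 ∧ (n + 1) / 2 = q + r := by omega
    obtain ⟨e1, e2, e3⟩ := h2
    rw [e3]
    rcases Nat.eq_zero_or_pos r with h0 | h0
    · have : a + b = 2 * q := by omega
      zify
      nlinarith [sq_nonneg ((a : ℤ) - b)]
    · have hr1 : r = 1 := by omega
      have hab : a + b = 2 * q + 1 := by omega
      have hne : (a : ℤ) - b ≠ 0 := by omega
      have hsq : 1 ≤ ((a : ℤ) - b) ^ 2 := by
        rcases lt_or_gt_of_ne hne with h | h <;> nlinarith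
      zify
      nlinarith
  refine h1.trans (Nat.mul_le_mul ?_ ?_) <;> exact Nat.div_le_div_right (by omega)

/-- weighted Cauchy–Schwarz over ℕ. -/
lemma cs_nat (T : Finset V) (c b : V → ℕ) :
    (∑ u ∈ T, c u * b u) ^ 2 ≤ (∑ u ∈ T, c u) * (∑ u ∈ T, c u * b u ^ 2) :=
  Finset.sum_sq_le_sum_mul_sum_of_sq_eq_mul T
    (fun _ _ => Nat.zero_le _) (fun _ _ => Nat.zero_le _)
    (fun i _ => by ring)
lemma Bq_zero_le (y : V) (Δ : ℕ) (hΔ : ∀ v : V, G.degree v ≤ Δ) : Bq G y 0 ≤ Δ := by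
  classical
  rw [Bq]
  rw [Finset.sum_eq_single y]
  · calc dwn G y y * geo G y y ^ 2 ≤ G.degree y * geo G y y ^ 2 :=
          Nat.mul_le_mul_right _ (sum_ecnt_le_degree _ _)
      _ ≤ Δ * geo G y y ^ 2 := Nat.mul_le_mul_right _ (hΔ y)
      _ ≤ Δ * 1 := by
          apply Nat.mul_le_mul_left
          have h0 : G.dist y y = 0 := by
            apply Nat.le_zero.mp
            exact dist_le_of_walk ⟨fun _ => y, Fin.elim0, rfl, rfl, fun i => i.elim0⟩
          have : Subsingleton (G.Walk y y 0) := by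
            constructor
            intro a b
            ext i
            · have hi : i = 0 := Fin.fin_one_eq_zero i
              rw [hi, a.vert_zero, b.vert_zero]
            · exact i.elim0
          have : Nat.card (G.Walk y y 0) ≤ 1 := by
            rw [Nat.card_eq_fintype_card, Fintype.card_le_one_iff_subsingleton]
            exact this
          calc geo G y y ^ 2 = Nat.card (G.Walk y y 0) ^ 2 := by rw [geo, h0]
            _ ≤ 1 := by nlinarith
      _ = Δ := mul_one Δ
  · intro v hv hvy
    have h0 : G.dist v y = 0 := mem_layer.mp hv
    have : IsEmpty (G.Walk v y 0) := by
      constructor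
      intro w
      exact hvy (w.vert_zero.symm.trans w.vert_last)
    have hg : geo G y v = 0 := by rw [geo, h0]; exact Nat.card_of_isEmpty
    rw [hg]
    ring
  · intro hy
    exfalso
    apply hy
    rw [mem_layer]
    apply Nat.le_zero.mp
    exact dist_le_of_walk ⟨fun _ => y, Fin.elim0, rfl, rfl, fun i => i.elim0⟩

lemma Bq_succ_le (y : V) (Δ : ℕ) (hΔ : ∀ v : V, G.degree v ≤ Δ) (s : ℕ) :
    Bq G y (s + 1) ≤ Δ / 2 * ((Δ + 1) / 2) * Bq G y s := by
  classical
  set M := Δ / 2 * ((Δ + 1) / 2) with hM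
  have key : ∀ v ∈ layer G y (s + 1),
      dwn G y v * geo G y v ^ 2 ≤ M * ∑ u ∈ layer G y s, ecnt G v u * geo G y u ^ 2 := by
    intro v hv
    have hdv : G.dist v y = s + 1 := mem_layer.mp hv
    have hrec : geo G y v = ∑ u ∈ layer G y s, ecnt G v u * geo G y u := geo_succ hdv
    have hcs : geo G y v ^ 2 ≤
        (∑ u ∈ layer G y s, ecnt G v u) * (∑ u ∈ layer G y s, ecnt G v u * geo G y u ^ 2) := by
      rw [hrec]; exact cs_nat _ _ _
    have hupdown : dwn G y v * (∑ u ∈ layer G y s, ecnt G v u) ≤ M := by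
      rw [mul_comm, hM]
      apply prod_le_floor_ceil
      have hdisj : Disjoint (layer G y s) (layer G y (s + 2)) := by
        rw [Finset.disjoint_left]
        intro a ha ha'
        rw [mem_layer] at ha ha'
        omega
      calc (∑ u ∈ layer G y s, ecnt G v u) + dwn G y v
          = ∑ u ∈ layer G y s ∪ layer G y (s + 2), ecnt G v u := by
            rw [Finset.sum_union hdisj, dwn, hdv]
        _ ≤ G.degree v := sum_ecnt_le_degree _ _
        _ ≤ Δ := hΔ v
    calc dwn G y v * geo G y v ^ 2
        ≤ dwn G y v * ((∑ u ∈ layer G y s, ecnt G v u) *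
            (∑ u ∈ layer G y s, ecnt G v u * geo G y u ^ 2)) :=
          Nat.mul_le_mul_left _ hcs
      _ = (dwn G y v * (∑ u ∈ layer G y s, ecnt G v u)) *
            (∑ u ∈ layer G y s, ecnt G v u * geo G y u ^ 2) := by ring
      _ ≤ M * ∑ u ∈ layer G y s, ecnt G v u * geo G y u ^ 2 :=
          Nat.mul_le_mul_right _ hupdown
  calc Bq G y (s + 1)
      ≤ ∑ v ∈ layer G y (s + 1), M * ∑ u ∈ layer G y s, ecnt G v u * geo G y u ^ 2 :=
        Finset.sum_le_sum key
    _ = M * ∑ u ∈ layer G y s, (∑ v ∈ layer G y (s + 1), ecnt G u v) * geo G y u ^ 2 := by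
        rw [← Finset.mul_sum, Finset.sum_comm]
        congr 1
        refine Finset.sum_congr rfl fun u _ => ?_
        rw [Finset.sum_mul]
        exact Finset.sum_congr rfl fun v _ => by rw [ecnt_symm]
    _ = M * Bq G y s := by
        congr 1
        refine Finset.sum_congr rfl fun u hu => ?_
        rw [dwn, mem_layer.mp hu]

lemma Bq_le (y : V) (Δ : ℕ) (hΔ : ∀ v : V, G.degree v ≤ Δ) (s : ℕ) :
    Bq G y s ≤ Δ * (Δ / 2 * ((Δ + 1) / 2)) ^ s := by
  induction s with
  | zero => simpa using Bq_zero_le y Δ hΔ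
  | succ s ih =>
    calc Bq G y (s + 1) ≤ Δ / 2 * ((Δ + 1) / 2) * Bq G y s := Bq_succ_le y Δ hΔ s
      _ ≤ Δ / 2 * ((Δ + 1) / 2) * (Δ * (Δ / 2 * ((Δ + 1) / 2)) ^ s) :=
          Nat.mul_le_mul_left _ ih
      _ = Δ * (Δ / 2 * ((Δ + 1) / 2)) ^ (s + 1) := by ring

noncomputable def numShortestPaths' (G : Multigraph V E) (x y : V) : ℕ :=
  Nat.card (G.Walk x y (G.dist x y))

end Counting

end Multigraph

/-- In a multigraph of maximum degree at most Δ, if the distance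
between x and y is t ≥ 1, then the number of shortest x–y paths satisfies
n_G(x,y)² ≤ Δ² · (⌊Δ/2⌋·⌈Δ/2⌉)^(t-1). -/
theorem numShortestPaths_sq_le {V E : Type} [Fintype V] [Fintype E]
    (G : Multigraph V E) (Δ : ℕ) (hΔ : ∀ v : V, G.degree v ≤ Δ)
    (x y : V) (t : ℕ) (ht : G.dist x y = t) (ht1 : 1 ≤ t) :
    (G.numShortestPaths x y) ^ 2 ≤ Δ ^ 2 * ((Δ / 2) * ((Δ + 1) / 2)) ^ (t - 1) := by

  classical
  obtain ⟨s, rfl⟩ : ∃ s, t = s + 1 := ⟨t - 1, by omega⟩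
  have hx : G.dist x y = s + 1 := ht
  have hn : Multigraph.numShortestPaths G x y = Multigraph.geo G y x := rfl
  have hrec : Multigraph.geo G y x =
      ∑ u ∈ Multigraph.layer G y s, Multigraph.ecnt G x u * Multigraph.geo G y u :=
    Multigraph.geo_succ hx
  have hcs : Multigraph.geo G y x ^ 2 ≤
      (∑ u ∈ Multigraph.layer G y s, Multigraph.ecnt G x u) *
        (∑ u ∈ Multigraph.layer G y s, Multigraph.ecnt G x u * Multigraph.geo G y u ^ 2) := by
    rw [hrec]
    exact Multigraph.cs_nat _ _ _
  have h1 : ∑ u ∈ Multigraph.layer G y s, Multigraph.ecnt G x u ≤ Δ :=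
    (Multigraph.sum_ecnt_le_degree _ _).trans (hΔ x)
  have h2 : ∀ u ∈ Multigraph.layer G y s,
      Multigraph.ecnt G x u * Multigraph.geo G y u ^ 2 ≤
        Multigraph.dwn G y u * Multigraph.geo G y u ^ 2 := by
    intro u hu
    apply Nat.mul_le_mul_right
    rw [Multigraph.ecnt_symm, Multigraph.dwn, Multigraph.mem_layer.mp hu]
    exact Finset.single_le_sum (f := fun w => Multigraph.ecnt G u w)
      (fun _ _ => Nat.zero_le _) (Multigraph.mem_layer.mpr hx)
  have h3 : ∑ u ∈ Multigraph.layer G y s,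
      Multigraph.ecnt G x u * Multigraph.geo G y u ^ 2 ≤ Multigraph.Bq G y s :=
    Finset.sum_le_sum h2
  have h4 : Multigraph.Bq G y s ≤ Δ * (Δ / 2 * ((Δ + 1) / 2)) ^ s :=
    Multigraph.Bq_le y Δ hΔ s
  have : Multigraph.geo G y x ^ 2 ≤ Δ * (Δ * (Δ / 2 * ((Δ + 1) / 2)) ^ s) := by
    calc Multigraph.geo G y x ^ 2
        ≤ (∑ u ∈ Multigraph.layer G y s, Multigraph.ecnt G x u) *
            (∑ u ∈ Multigraph.layer G y s,
              Multigraph.ecnt G x u * Multigraph.geo G y u ^ 2) := hcs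
      _ ≤ Δ * (Δ * (Δ / 2 * ((Δ + 1) / 2)) ^ s) :=
          Nat.mul_le_mul h1 (h3.trans h4)
  rw [hn]
  calc Multigraph.geo G y x ^ 2 ≤ Δ * (Δ * (Δ / 2 * ((Δ + 1) / 2)) ^ s) := this
    _ = Δ ^ 2 * (Δ / 2 * ((Δ + 1) / 2)) ^ (s + 1 - 1) := by rw [Nat.add_sub_cancel]; ring
end

section
/- Let C_{2t,Δ} be the multigraph obtained from the cycle on 2t vertices by replacing the edges alternately with ⌊Δ/2⌋ and ⌈Δ/2⌉ parallel edges. Then for two antipodal vertices x, y of the cycle, the number of shortest x–y paths in C_{2t,Δ} equals 2 · (⌊Δ/2⌋ · ⌈Δ/2⌉)^(t/2) when t is even, and (⌊Δ/2⌋ + ⌈Δ/2⌉) · (⌊Δ/2⌋ · ⌈Δ/2⌉)^((t-1)/2) when t is odd. -/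
/-- Bundle size on the i-th edge of the cycle: alternately ⌊Δ/2⌋ and ⌈Δ/2⌉. -/
def bundleSize (Δ t : ℕ) (i : ZMod (2 * t)) : ℕ :=
  if i.val % 2 = 0 then Δ / 2 else (Δ + 1) / 2

/-- The multigraph C_{2t,Δ}: the cycle on 2t vertices with the i-th edge replaced
by a bundle of `bundleSize Δ t i` parallel edges. -/
def cycleMultigraph (Δ t : ℕ) :
    Multigraph (ZMod (2 * t)) (Σ i : ZMod (2 * t), Fin (bundleSize Δ t i)) where
  ends e := s(e.1, e.1 + 1)

/-!
Record each step of a walk in `C_{2t,Δ}` as `+1` or `-1` according to the direction in which it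
goes around the cycle. For a walk from `0` to `t` these signs add up to an integer that is
congruent to `t` modulo `2t` and bounded in absolute value by the length, so every such walk has
length at least `t`, and a walk of length exactly `t` goes all the way round in one direction.
Such a walk is determined by its edges, chosen independently from the bundles `0, 1, …, t - 1`
(forwards) or `-1, -2, …, -t` (backwards), and the two products of alternating bundle sizes add
up to the formula. If there is no walk of length `t` at all, then `Δ ≤ 1` and `0`, `t` lie in
different components, so both sides vanish.
-/

open Finset

namespace Multigraph

variable {V E : Type} {G : Multigraph V E} {x y : V} {n : ℕ}

theorem Walk.edge_injective : Function.Injective (Walk.edge : G.Walk x y n → Fin n → E) := by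
  intro w₁ w₂ h
  refine Walk.ext (funext fun k => ?_) h
  induction k using Fin.induction with
  | zero => rw [w₁.vert_zero, w₂.vert_zero]
  | succ i ih =>
    have hends := w₁.ends_eq i
    rw [h, w₂.ends_eq i, ih] at hends
    exact (Sym2.congr_right.mp hends).symm

theorem Walk.mem_of_closed (w : G.Walk x y n) (S : Set V)
    (hS : ∀ e u v, G.ends e = s(u, v) → u ∈ S → v ∈ S) (hx : x ∈ S) : y ∈ S := by
  have hmem : ∀ k, w.vert k ∈ S :=
    Fin.induction (by rwa [w.vert_zero]) fun i hi => hS _ _ _ (w.ends_eq i) hi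
  exact w.vert_last ▸ hmem _

theorem numShortestPaths_eq_zero_of_closed (S : Set V)
    (hS : ∀ e u v, G.ends e = s(u, v) → u ∈ S → v ∈ S) (hx : x ∈ S) (hy : y ∉ S) :
    G.numShortestPaths x y = 0 :=
  have : IsEmpty (G.Walk x y (G.dist x y)) := ⟨fun w => hy (w.mem_of_closed S hS hx)⟩
  Nat.card_of_isEmpty

theorem numShortestPaths_eq_card_walk (hn : Nonempty (G.Walk x y n))
    (hmin : ∀ m, G.Walk x y m → n ≤ m) :
    G.numShortestPaths x y = Nat.card (G.Walk x y n) := by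
  have hdist : G.dist x y = n :=
    le_antisymm (Nat.sInf_le hn) (le_csInf ⟨n, hn⟩ fun m ⟨w⟩ => hmin m w)
  rw [numShortestPaths, hdist]

end Multigraph

theorem Fin.sum_succ_sub_castSucc {M : Type*} [AddCommGroup M] {n : ℕ} (f : Fin (n + 1) → M) :
    ∑ i : Fin n, (f i.succ - f i.castSucc) = f (Fin.last n) - f 0 := by
  cases n with
  | zero => simp
  | succ n => rw [← Finset.Iic_top, Fin.sum_Iic_sub, Fin.top_eq_last, Fin.succ_last]

theorem Nat.card_fun_sigma_fst_eq {ι α : Type*} [Fintype ι] {β : α → Type*} (a : ι → α) :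
    Nat.card {f : ι → Sigma β // ∀ i, (f i).1 = a i} = ∏ i, Nat.card (β (a i)) := by
  rw [Nat.card_congr (Equiv.subtypePiEquivPi.trans
    (Equiv.piCongrRight fun i => Equiv.sigmaSubtype (a i))), Nat.card_pi]

theorem Finset.prod_range_ite_mod_two {M : Type*} [CommMonoid M] (a b : M) (n : ℕ) :
    ∏ i ∈ range n, (if i % 2 = 0 then a else b) = a ^ ((n + 1) / 2) * b ^ (n / 2) := by
  induction n with
  | zero => simp
  | succ n ih =>
    rw [prod_range_succ, ih]
    rcases Nat.mod_two_eq_zero_or_one n with h | h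
    · rw [if_pos h, show (n + 1 + 1) / 2 = (n + 1) / 2 + 1 by omega,
        show (n + 1) / 2 = n / 2 by omega, pow_succ, mul_right_comm]
    · rw [if_neg (by omega), show (n + 1 + 1) / 2 = (n + 1) / 2 by omega,
        show (n + 1) / 2 = n / 2 + 1 by omega, pow_succ b, mul_assoc]

theorem pow_half_mul_add_pow_half_mul {R : Type*} [CommSemiring R] (a b : R) (t : ℕ) :
    a ^ ((t + 1) / 2) * b ^ (t / 2) + b ^ ((t + 1) / 2) * a ^ (t / 2) =
      if Even t then 2 * (a * b) ^ (t / 2) else (a + b) * (a * b) ^ ((t - 1) / 2) := by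
  obtain ⟨k, rfl | rfl⟩ := Nat.even_or_odd' t
  · rw [if_pos (even_two_mul k), show (2 * k + 1) / 2 = k by omega, show 2 * k / 2 = k by omega]
    ring
  · rw [if_neg (Nat.not_even_iff_odd.mpr (odd_two_mul_add_one k)),
      show (2 * k + 1 + 1) / 2 = k + 1 by omega, show (2 * k + 1) / 2 = k by omega,
      show (2 * k + 1 - 1) / 2 = k by omega]
    ring

theorem Int.le_abs_of_modEq_two_mul {s t : ℤ} (ht : 0 ≤ t) (h : s ≡ t [ZMOD 2 * t]) :
    t ≤ |s| := by
  obtain ⟨k, hk⟩ := h.dvd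
  rw [show s = t * (1 - 2 * k) by linarith, abs_mul, abs_of_nonneg ht]
  exact le_mul_of_one_le_right ht (Int.one_le_abs (by omega))

theorem ZMod.natCast_ne_zero_of_lt {a n : ℕ} (h0 : 0 < a) (h : a < n) : (a : ZMod n) ≠ 0 := by
  rw [← ZMod.val_ne_zero, ZMod.val_natCast_of_lt h]
  exact h0.ne'

section Cycle

variable {Δ t : ℕ} {x y : ZMod (2 * t)} {n : ℕ}

instance fact_one_lt_two_mul [NeZero t] : Fact (1 < 2 * t) :=
  ⟨by have := NeZero.pos t; omega⟩

@[simp]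
theorem cycleMultigraph_ends (e : Σ i : ZMod (2 * t), Fin (bundleSize Δ t i)) :
    (cycleMultigraph Δ t).ends e = s(e.1, e.1 + 1) :=
  rfl

namespace Multigraph.Walk

variable (w : (cycleMultigraph Δ t).Walk x y n)

theorem cycle_step (i : Fin n) :
    ((w.edge i).1 = w.vert i.castSucc ∧ (w.edge i).1 + 1 = w.vert i.succ) ∨
      ((w.edge i).1 = w.vert i.succ ∧ (w.edge i).1 + 1 = w.vert i.castSucc) :=
  Sym2.eq_iff.mp (w.ends_eq i)

/-- The direction of a step is read off its edge rather than its endpoints: for `t = 1` the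
vertices `v + 1` and `v - 1` coincide, but the two bundles joining them do not. -/
def stepSign (i : Fin n) : ℤ :=
  if (w.edge i).1 = w.vert i.castSucc then 1 else -1

theorem stepSign_le_one (i : Fin n) : w.stepSign i ≤ 1 := by
  unfold stepSign; split_ifs <;> norm_num

theorem neg_one_le_stepSign (i : Fin n) : -1 ≤ w.stepSign i := by
  unfold stepSign; split_ifs <;> norm_num

theorem edge_fst_of_stepSign_eq_one {i : Fin n} (h : w.stepSign i = 1) :
    (w.edge i).1 = w.vert i.castSucc := by
  by_contra hne
  simp [stepSign, hne] at h

theorem edge_fst_of_stepSign_eq_neg_one {i : Fin n} (h : w.stepSign i = -1) :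
    (w.edge i).1 = w.vert i.succ := by
  have hne : (w.edge i).1 ≠ w.vert i.castSucc := fun he => by simp [stepSign, he] at h
  exact ((w.cycle_step i).resolve_left fun h' => hne h'.1).1

theorem abs_sum_stepSign_le : |∑ i, w.stepSign i| ≤ n := by
  rw [abs_le]
  constructor
  · calc -(n : ℤ) = ∑ _i : Fin n, (-1 : ℤ) := by simp
      _ ≤ ∑ i, w.stepSign i := sum_le_sum fun i _ => w.neg_one_le_stepSign i
  · calc ∑ i, w.stepSign i ≤ ∑ _i : Fin n, (1 : ℤ) :=
          sum_le_sum fun i _ => w.stepSign_le_one i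
      _ = n := by simp

variable [NeZero t]

theorem cast_stepSign (i : Fin n) :
    (w.stepSign i : ZMod (2 * t)) = w.vert i.succ - w.vert i.castSucc := by
  unfold stepSign
  split_ifs with h <;> rcases w.cycle_step i with ⟨h₁, h₂⟩ | ⟨h₁, h₂⟩
  · rw [← h₂, h]; push_cast; ring
  · rw [h] at h₂
    exact absurd (add_eq_left.mp h₂) one_ne_zero
  · exact absurd h₁ h
  · rw [← h₁, ← h₂]; push_cast; ring

theorem cast_sum_stepSign : ((∑ i, w.stepSign i : ℤ) : ZMod (2 * t)) = y - x := by
  push_cast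
  simp only [cast_stepSign]
  rw [Fin.sum_succ_sub_castSucc, w.vert_last, w.vert_zero]

theorem le_abs_sum_stepSign (hy : y = x + t) : (t : ℤ) ≤ |∑ i, w.stepSign i| := by
  apply Int.le_abs_of_modEq_two_mul (Nat.cast_nonneg t)
  subst hy
  have h : ((∑ i, w.stepSign i : ℤ) : ZMod (2 * t)) = ((t : ℤ) : ZMod (2 * t)) := by
    rw [w.cast_sum_stepSign, add_sub_cancel_left, Int.cast_natCast]
  rw [ZMod.intCast_eq_intCast_iff] at h
  exact_mod_cast h

theorem le_length_of_antipodal (w : (cycleMultigraph Δ t).Walk x y n) (hy : y = x + t) : t ≤ n :=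
  mod_cast (w.le_abs_sum_stepSign hy).trans w.abs_sum_stepSign_le

theorem stepSign_eq_of_antipodal (w : (cycleMultigraph Δ t).Walk x y t) (hy : y = x + t) :
    (∀ i, w.stepSign i = 1) ∨ (∀ i, w.stepSign i = -1) := by
  have habs : |∑ i, w.stepSign i| = t :=
    le_antisymm w.abs_sum_stepSign_le (w.le_abs_sum_stepSign hy)
  rcases (abs_eq (Nat.cast_nonneg _)).mp habs with h | h
  · refine Or.inl fun i => ((sum_eq_sum_iff_of_le fun i _ => w.stepSign_le_one i).mp ?_) i
      (mem_univ i)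
    simpa using h
  · refine Or.inr fun i => (((sum_eq_sum_iff_of_le fun i _ => w.neg_one_le_stepSign i).mp ?_) i
      (mem_univ i)).symm
    simpa using h.symm

theorem vert_eq_of_stepSign_eq (c : ℤ) (h : ∀ i, w.stepSign i = c) (k : Fin (n + 1)) :
    w.vert k = x + (k : ℕ) * c := by
  induction k using Fin.induction with
  | zero => simp [w.vert_zero]
  | succ i ih =>
    rw [← sub_add_cancel (w.vert i.succ) (w.vert i.castSucc), ← w.cast_stepSign, h, ih]
    simp only [Fin.val_succ, Fin.val_castSucc]
    push_cast
    ring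

theorem edge_fst_of_forall_stepSign_eq_one (h : ∀ i, w.stepSign i = 1) (i : Fin n) :
    (w.edge i).1 = x + (i : ℕ) := by
  rw [w.edge_fst_of_stepSign_eq_one (h i), w.vert_eq_of_stepSign_eq 1 h]
  simp

theorem edge_fst_of_forall_stepSign_eq_neg_one (h : ∀ i, w.stepSign i = -1) (i : Fin n) :
    (w.edge i).1 = x - ((i : ℕ) + 1) := by
  rw [w.edge_fst_of_stepSign_eq_neg_one (h i), w.vert_eq_of_stepSign_eq (-1) h]
  simp only [Fin.val_succ]
  push_cast
  ring

end Multigraph.Walk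

namespace cycleMultigraph

def forwardWalk (f : Fin n → Σ i : ZMod (2 * t), Fin (bundleSize Δ t i))
    (hf : ∀ i, (f i).1 = x + (i : ℕ)) (hy : y = x + n) : (cycleMultigraph Δ t).Walk x y n where
  vert k := x + (k : ℕ)
  edge := f
  vert_zero := by simp
  vert_last := by simp [hy]
  ends_eq i := by simp [hf, Fin.val_succ, add_assoc]

def backwardWalk (f : Fin n → Σ i : ZMod (2 * t), Fin (bundleSize Δ t i))
    (hf : ∀ i, (f i).1 = x - ((i : ℕ) + 1)) (hy : y = x - n) :
    (cycleMultigraph Δ t).Walk x y n where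
  vert k := x - (k : ℕ)
  edge := f
  vert_zero := by simp
  vert_last := by simp [hy]
  ends_eq i := by
    rw [cycleMultigraph_ends, hf, Sym2.eq_swap]
    simp only [Fin.val_succ, Fin.val_castSucc]
    push_cast
    ring_nf

theorem bundleSize_natCast {i : ℕ} (hi : i < 2 * t) :
    bundleSize Δ t i = if i % 2 = 0 then Δ / 2 else (Δ + 1) / 2 := by
  rw [bundleSize, ZMod.val_natCast_of_lt hi]

theorem prod_bundleSize_natCast :
    ∏ i : Fin t, bundleSize Δ t (i : ℕ) =
      (Δ / 2) ^ ((t + 1) / 2) * ((Δ + 1) / 2) ^ (t / 2) := by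
  rw [Fin.prod_univ_eq_prod_range (fun i => bundleSize Δ t i), ← prod_range_ite_mod_two]
  exact prod_congr rfl fun i hi => bundleSize_natCast (by rw [mem_range] at hi; omega)

variable [NeZero t]

theorem bundleSize_neg_natCast_add_one {i : ℕ} (hi : i + 1 < 2 * t) :
    bundleSize Δ t (-((i : ZMod (2 * t)) + 1)) = if i % 2 = 0 then (Δ + 1) / 2 else Δ / 2 := by
  rw [bundleSize, ← Nat.cast_succ, ZMod.neg_val,
    if_neg (ZMod.natCast_ne_zero_of_lt i.succ_pos hi), ZMod.val_natCast_of_lt hi]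
  split_ifs <;> omega

theorem prod_bundleSize_neg_natCast_add_one :
    ∏ i : Fin t, bundleSize Δ t (-((i : ℕ) + 1)) =
      ((Δ + 1) / 2) ^ ((t + 1) / 2) * (Δ / 2) ^ (t / 2) := by
  rw [Fin.prod_univ_eq_prod_range (fun i => bundleSize Δ t (-((i : ZMod (2 * t)) + 1))),
    ← prod_range_ite_mod_two]
  exact prod_congr rfl fun i hi => bundleSize_neg_natCast_add_one (by rw [mem_range] at hi; omega)

theorem card_walk_antipodal (hy : y = x + t) :
    Nat.card ((cycleMultigraph Δ t).Walk x y t) =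
      ∏ i : Fin t, bundleSize Δ t (x + (i : ℕ)) +
        ∏ i : Fin t, bundleSize Δ t (x - ((i : ℕ) + 1)) := by
  classical
  let IsForward (f : Fin t → Σ i : ZMod (2 * t), Fin (bundleSize Δ t i)) : Prop :=
    ∀ i, (f i).1 = x + (i : ℕ)
  let IsBackward (f : Fin t → Σ i : ZMod (2 * t), Fin (bundleSize Δ t i)) : Prop :=
    ∀ i, (f i).1 = x - ((i : ℕ) + 1)
  have hdisj : Disjoint IsForward IsBackward := by
    intro r hr₁ hr₂ f hf
    have h₀ := (hr₁ f hf ⟨0, NeZero.pos t⟩).symm.trans (hr₂ f hf ⟨0, NeZero.pos t⟩)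
    simp only [Nat.cast_zero, add_zero, zero_add] at h₀
    exact absurd (sub_eq_self.mp h₀.symm) one_ne_zero
  have hy' : y = x - t := by
    rw [hy, eq_sub_iff_add_eq, add_assoc, ← two_mul]
    exact_mod_cast (add_eq_left.mpr (ZMod.natCast_self (2 * t)))
  let edges (w : (cycleMultigraph Δ t).Walk x y t) : {f // IsForward f ∨ IsBackward f} :=
    ⟨w.edge, (w.stepSign_eq_of_antipodal hy).imp w.edge_fst_of_forall_stepSign_eq_one
      w.edge_fst_of_forall_stepSign_eq_neg_one⟩
  have hbij : Function.Bijective edges := by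
    refine ⟨fun w₁ w₂ h => Multigraph.Walk.edge_injective (congrArg Subtype.val h), ?_⟩
    rintro ⟨f, hf | hf⟩
    · exact ⟨forwardWalk f hf hy, rfl⟩
    · exact ⟨backwardWalk f hf hy', rfl⟩
  rw [Nat.card_eq_of_bijective edges hbij, Nat.card_congr (subtypeOrEquiv _ _ hdisj),
    Nat.card_sum, Nat.card_fun_sigma_fst_eq, Nat.card_fun_sigma_fst_eq]
  simp

theorem numShortestPaths_antipodal_zero : (cycleMultigraph 0 t).numShortestPaths 0 t = 0 :=
  Multigraph.numShortestPaths_eq_zero_of_closed {0}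
    (fun e => absurd e.2.isLt (by simp [bundleSize])) rfl
    (ZMod.natCast_ne_zero_of_lt (NeZero.pos t) (by have := NeZero.pos t; omega))

theorem numShortestPaths_antipodal_one (ht : 2 ≤ t) :
    (cycleMultigraph 1 t).numShortestPaths 0 t = 0 := by
  -- Only the odd bundles are nonempty: the edges form a perfect matching, and `{0, -1}` is one
  -- of its components.
  have hodd (e : Σ i : ZMod (2 * t), Fin (bundleSize 1 t i)) : e.1.val % 2 = 1 := by
    have := e.2.isLt
    unfold bundleSize at this
    split_ifs at this <;> omega
  refine Multigraph.numShortestPaths_eq_zero_of_closed {0, -1} ?_ (by simp) ?_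
  · rintro e u v he (rfl | rfl)
    all_goals
      rw [cycleMultigraph_ends, Sym2.eq_iff] at he
      simp only [Set.mem_insert_iff, Set.mem_singleton_iff]
    · rcases he with ⟨he, -⟩ | ⟨rfl, he⟩
      · simpa [he] using hodd e
      · exact Or.inr (eq_neg_of_add_eq_zero_left he)
    · rcases he with ⟨he, rfl⟩ | ⟨rfl, he⟩
      · simp [he]
      · have := hodd e
        rw [eq_sub_of_add_eq he, ← neg_add', one_add_one_eq_two, ZMod.neg_val, if_neg,
          ZMod.val_two_eq_two_mod, Nat.mod_eq_of_lt (a := 2) (b := 2 * t) (by omega)] at this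
        · omega
        · exact_mod_cast ZMod.natCast_ne_zero_of_lt (n := 2 * t) two_pos (by omega)
  · simp only [Set.mem_insert_iff, Set.mem_singleton_iff, not_or]
    refine ⟨ZMod.natCast_ne_zero_of_lt (a := t) (by omega) (by omega), fun h => ?_⟩
    exact ZMod.natCast_ne_zero_of_lt (a := t + 1) (n := 2 * t) (by omega) (by omega)
      (by push_cast; exact add_eq_zero_iff_eq_neg.mpr h)

theorem numShortestPaths_antipodal_eq_card :
    (cycleMultigraph Δ t).numShortestPaths 0 t = Nat.card ((cycleMultigraph Δ t).Walk 0 t t) := by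
  have hy : (t : ZMod (2 * t)) = 0 + t := (zero_add _).symm
  by_cases h : Nonempty ((cycleMultigraph Δ t).Walk 0 t t)
  · exact Multigraph.numShortestPaths_eq_card_walk h fun m w => w.le_length_of_antipodal hy
  rw [not_nonempty_iff] at h
  have hcard := card_walk_antipodal (Δ := Δ) hy
  simp only [Nat.card_of_isEmpty, zero_add, zero_sub, prod_bundleSize_natCast,
    prod_bundleSize_neg_natCast_add_one] at hcard
  rw [Nat.card_of_isEmpty]
  obtain rfl | ⟨rfl, ht⟩ : Δ = 0 ∨ Δ = 1 ∧ 2 ≤ t := by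
    simp [eq_comm (a := 0), Nat.div_eq_zero_iff] at hcard
    omega
  · exact numShortestPaths_antipodal_zero
  · exact numShortestPaths_antipodal_one ht

end cycleMultigraph

end Cycle

/-- In C_{2t,Δ}, the number of shortest paths between two
antipodal vertices equals 2 · (⌊Δ/2⌋·⌈Δ/2⌉)^(t/2) if t is even, and
(⌊Δ/2⌋+⌈Δ/2⌉) · (⌊Δ/2⌋·⌈Δ/2⌉)^((t-1)/2) if t is odd. -/
theorem cycleMultigraph_numShortestPaths (Δ t : ℕ) (ht : 1 ≤ t) :
    (cycleMultigraph Δ t).numShortestPaths (0 : ZMod (2 * t)) (t : ZMod (2 * t)) =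
      if Even t then 2 * ((Δ / 2) * ((Δ + 1) / 2)) ^ (t / 2)
      else ((Δ / 2) + ((Δ + 1) / 2)) * ((Δ / 2) * ((Δ + 1) / 2)) ^ ((t - 1) / 2) := by
  have : NeZero t := ⟨by omega⟩
  rw [cycleMultigraph.numShortestPaths_antipodal_eq_card,
    cycleMultigraph.card_walk_antipodal (zero_add _).symm]
  simp only [zero_add, zero_sub]
  rw [cycleMultigraph.prod_bundleSize_natCast,
    cycleMultigraph.prod_bundleSize_neg_natCast_add_one, pow_half_mul_add_pow_half_mul]
end

section
/- Let G be a finite simple graph with maximum degree at most Δ ≥ 2, and let x, y be vertices at distance t ≥ 3. Then n_G(x,y)^2 ≤ Δ^2 (Δ-1)^2 · (⌊Δ/2⌋ · ⌈Δ/2⌉)^(t-3), i.e. n_G(x,y) ≤ Δ(Δ-1) · (⌊Δ/2⌋⌈Δ/2⌉)^((t-3)/2). -/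
/-!
Let `d_u(v)` be the number of neighbours of `v` that are closer to `u` than `v` is. The random
walk from `x` that always steps to a uniformly chosen neighbour closer to `y` follows a shortest
path `P` with probability `1 / A(P)`, where `A(P)` is the product of `d_y` over the vertices of
`P` other than `y`; hence `∑_P 1 / A(P) ≤ 1`, and symmetrically `∑_P 1 / B(P) ≤ 1` with `d_x`.
By Cauchy–Schwarz, `n² ≤ max_P A(P) B(P)`. Grouped by vertices, `A(P) B(P)` is `d_y(x) d_x(y)`
times `d_y(v) d_x(v)` over the inner vertices `v` of `P`. No neighbour of `v` is closer to both
ends, so `d_y(v) + d_x(v) ≤ Δ` and `d_y(v) d_x(v) ≤ ⌊Δ/2⌋⌈Δ/2⌉`; at the two neighbours of `x`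
and `y` on `P` one factor is `1`, giving `Δ - 1` there instead.
-/

open Finset

theorem Nat.mul_le_div_two_mul_succ_div_two {a b n : ℕ} (h : a + b ≤ n) :
    a * b ≤ n / 2 * ((n + 1) / 2) := by
  obtain ⟨m, rfl | rfl⟩ := n.even_or_odd'
  · rw [show 2 * m / 2 = m by omega, show (2 * m + 1) / 2 = m by omega]
    nlinarith [sq_nonneg ((a : ℤ) - b)]
  · rw [show (2 * m + 1) / 2 = m by omega, show (2 * m + 1 + 1) / 2 = m + 1 by omega]
    nlinarith [sq_nonneg ((a : ℤ) - b)]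

theorem Finset.card_sq_le_of_sum_inv_le_one {ι : Type*} {s : Finset ι} {a b : ι → ℕ} {C : ℕ}
    (ha : ∑ i ∈ s, ((a i : ℝ))⁻¹ ≤ 1) (hb : ∑ i ∈ s, ((b i : ℝ))⁻¹ ≤ 1)
    (hpos : ∀ i ∈ s, 0 < a i * b i) (hC : ∀ i ∈ s, a i * b i ≤ C) : #s ^ 2 ≤ C := by
  have hterm : ∀ i ∈ s, 1 ≤ √C * (√(a i : ℝ)⁻¹ * √(b i : ℝ)⁻¹) := by
    intro i hi
    rw [← Real.sqrt_mul (by positivity), ← Real.sqrt_mul (by positivity), ← mul_inv,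
      Real.one_le_sqrt, ← div_eq_mul_inv, one_le_div (by exact_mod_cast hpos i hi)]
    exact_mod_cast hC i hi
  have hcard : (#s : ℝ) ≤ √C :=
    calc (#s : ℝ) = ∑ _i ∈ s, (1 : ℝ) := by simp
      _ ≤ ∑ i ∈ s, √C * (√(a i : ℝ)⁻¹ * √(b i : ℝ)⁻¹) := sum_le_sum hterm
      _ = √C * ∑ i ∈ s, √(a i : ℝ)⁻¹ * √(b i : ℝ)⁻¹ := (mul_sum ..).symm
      _ ≤ √C * (√(∑ i ∈ s, (a i : ℝ)⁻¹) * √(∑ i ∈ s, (b i : ℝ)⁻¹)) := by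
        gcongr
        exact Real.sum_sqrt_mul_sqrt_le s (fun i => by positivity) (fun i => by positivity)
      _ ≤ √C * (1 * 1) := by gcongr <;> exact Real.sqrt_le_one.2 ‹_›
      _ = √C := by ring
  have := pow_le_pow_left₀ (by positivity) hcard 2
  rw [Real.sq_sqrt (by positivity)] at this
  exact_mod_cast this

namespace SimpleGraph

variable {V : Type*} {G : SimpleGraph V} {u v x y : V}

theorem Walk.dist_getVert_of_length_eq_dist (p : G.Walk u v) (hp : p.length = G.dist u v)
    {i : ℕ} (hi : i ≤ p.length) :
    G.dist u (p.getVert i) = i ∧ G.dist (p.getVert i) v = p.length - i := by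
  have hstart := dist_le (p.take i)
  have hend := dist_le (p.drop i)
  have htriangle := (p.take i).reachable.dist_triangle_left v
  rw [Walk.take_length, min_eq_left hi] at hstart
  rw [Walk.drop_length] at hend
  omega

variable [G.LocallyFinite]

variable (G) in
noncomputable def closerNeighborFinset (u v : V) : Finset V :=
  {w ∈ G.neighborFinset v | G.dist w u + 1 = G.dist v u}

variable (G) in
/-- `max 1` makes `u` itself, which has no closer neighbour, count as `1`. -/
noncomputable def closerDegree (u v : V) : ℕ := max 1 #(G.closerNeighborFinset u v)

theorem closerNeighborFinset_subset_neighborFinset :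
    G.closerNeighborFinset u v ⊆ G.neighborFinset v :=
  filter_subset _ _

theorem mem_closerNeighborFinset_of_walk {w : V} (h : G.Adj v w) (q : G.Walk w u)
    (hq : q.length + 1 = G.dist v u) : w ∈ G.closerNeighborFinset u v := by
  refine mem_filter.2 ⟨(G.mem_neighborFinset v w).2 h, ?_⟩
  have := dist_le q
  have := h.reachable.dist_triangle_left u
  rw [dist_eq_one_iff_adj.2 h] at this
  omega

theorem closerNeighborFinset_nonempty (h : G.dist v u ≠ 0) :
    (G.closerNeighborFinset u v).Nonempty := by
  obtain ⟨p, hp⟩ := exists_walk_of_dist_ne_zero h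
  cases p with
  | nil => simp at h
  | cons hadj q => exact ⟨_, mem_closerNeighborFinset_of_walk hadj q hp⟩

theorem closerNeighborFinset_of_adj (h : G.Adj v u) : G.closerNeighborFinset u v = {u} := by
  ext w
  simp only [closerNeighborFinset, mem_filter, mem_neighborFinset, mem_singleton,
    dist_eq_one_iff_adj.2 h, Nat.add_eq_right, dist_eq_zero_iff_eq_or_not_reachable]
  constructor
  · rintro ⟨hw, rfl | hnr⟩
    · rfl
    · exact absurd (hw.symm.reachable.trans h.reachable) hnr
  · rintro rfl
    exact ⟨h, Or.inl rfl⟩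

theorem card_closerNeighborFinset_add_card_le_degree
    (hv : G.dist x v + G.dist v y = G.dist x y) :
    #(G.closerNeighborFinset y v) + #(G.closerNeighborFinset x v) ≤ G.degree v := by
  classical
  rw [← card_union_of_disjoint, ← card_neighborFinset_eq_degree]
  · exact card_le_card (union_subset closerNeighborFinset_subset_neighborFinset
      closerNeighborFinset_subset_neighborFinset)
  -- a common neighbour closer to both ends would shortcut the distance from `x` to `y`
  rw [Finset.disjoint_left]
  intro w hwy hwx
  obtain ⟨hadj, hwy⟩ := mem_filter.1 hwy
  obtain ⟨-, hwx⟩ := mem_filter.1 hwx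
  have hreach : G.Reachable w y :=
    ((G.mem_neighborFinset v w).1 hadj).symm.reachable.trans (.of_dist_ne_zero (by omega))
  have := hreach.dist_triangle_right x
  rw [dist_comm (u := w), dist_comm (u := v)] at hwx
  omega

theorem closerDegree_eq_card (h : G.dist v u ≠ 0) :
    G.closerDegree u v = #(G.closerNeighborFinset u v) :=
  max_eq_right (card_pos.2 (closerNeighborFinset_nonempty h))

theorem closerDegree_self : G.closerDegree u u = 1 := by
  simp [closerDegree, closerNeighborFinset]

theorem closerDegree_of_adj (h : G.Adj v u) : G.closerDegree u v = 1 := by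
  simp [closerDegree, closerNeighborFinset_of_adj h]

theorem closerDegree_le_degree (h : G.dist v u ≠ 0) : G.closerDegree u v ≤ G.degree v :=
  (closerDegree_eq_card h).trans_le
    (card_le_card closerNeighborFinset_subset_neighborFinset)

theorem closerDegree_mul_closerDegree_le_pred_left
    (hv : G.dist x v + G.dist v y = G.dist x y) (hxv : G.dist x v = 1) (hvy : G.dist v y ≠ 0) :
    G.closerDegree y v * G.closerDegree x v ≤ G.degree v - 1 := by
  have hadj := (dist_eq_one_iff_adj.1 hxv).symm
  have := card_closerNeighborFinset_add_card_le_degree hv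
  rw [closerNeighborFinset_of_adj hadj, card_singleton] at this
  rw [closerDegree_of_adj hadj, mul_one, closerDegree_eq_card hvy]
  omega

theorem closerDegree_mul_closerDegree_le_pred_right
    (hv : G.dist x v + G.dist v y = G.dist x y) (hxv : G.dist x v ≠ 0) (hvy : G.dist v y = 1) :
    G.closerDegree y v * G.closerDegree x v ≤ G.degree v - 1 := by
  have hv' : G.dist y v + G.dist v x = G.dist y x := by
    rw [dist_comm (u := y) (v := v), dist_comm (u := v) (v := x), dist_comm (u := y) (v := x)]
    omega
  rw [mul_comm]
  exact closerDegree_mul_closerDegree_le_pred_left hv' (dist_comm (G := G) ▸ hvy)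
    (dist_comm (G := G) ▸ hxv)

theorem closerDegree_mul_closerDegree_le (hv : G.dist x v + G.dist v y = G.dist x y)
    (hxv : G.dist x v ≠ 0) (hvy : G.dist v y ≠ 0) :
    G.closerDegree y v * G.closerDegree x v ≤ G.degree v / 2 * ((G.degree v + 1) / 2) := by
  rw [closerDegree_eq_card hvy, closerDegree_eq_card (dist_comm (G := G) ▸ hxv)]
  exact Nat.mul_le_div_two_mul_succ_div_two (card_closerNeighborFinset_add_card_le_degree hv)

/-- `1 / p.descentWeight u` is the probability that the random walk which always steps to a
uniformly chosen neighbour closer to `u` follows `p`. -/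
noncomputable def Walk.descentWeight (u : V) {v w : V} (p : G.Walk v w) : ℕ :=
  ∏ i ∈ range (p.length + 1), G.closerDegree u (p.getVert i)

theorem Walk.descentWeight_pos (p : G.Walk v x) : 0 < p.descentWeight u :=
  prod_pos fun _ _ => lt_max_of_lt_left one_pos

theorem Walk.descentWeight_cons (h : G.Adj v x) (q : G.Walk x y) :
    (q.cons h).descentWeight u = G.closerDegree u v * q.descentWeight u := by
  simp [descentWeight, prod_range_succ', mul_comm]

theorem Walk.descentWeight_reverse (p : G.Walk v x) :
    p.reverse.descentWeight u = p.descentWeight u := by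
  simp only [descentWeight, length_reverse, getVert_reverse]
  exact prod_range_reflect (fun i => G.closerDegree u (p.getVert i)) _

theorem Walk.descentWeight_mul_descentWeight_le {Δ : ℕ} (hΔ : ∀ v, G.degree v ≤ Δ)
    (p : G.Walk x y) (hp : p.length = G.dist x y) (h3 : 3 ≤ p.length) :
    p.descentWeight y * p.descentWeight x ≤
      Δ ^ 2 * (Δ - 1) ^ 2 * (Δ / 2 * ((Δ + 1) / 2)) ^ (p.length - 3) := by
  set F := fun i => G.closerDegree y (p.getVert i) * G.closerDegree x (p.getVert i) with hF
  have hdist := fun i (hi : i ≤ p.length) => p.dist_getVert_of_length_eq_dist hp hi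
  have hgeod : ∀ i ≤ p.length,
      G.dist x (p.getVert i) + G.dist (p.getVert i) y = G.dist x y := fun i hi => by
    have := hdist i hi
    omega
  obtain ⟨s, hs⟩ : ∃ s, p.length = s + 3 := ⟨p.length - 3, by omega⟩
  have hstart : F 0 ≤ Δ := by
    simp only [hF, getVert_zero, closerDegree_self, mul_one]
    exact (closerDegree_le_degree (by omega)).trans (hΔ x)
  have hend : F (s + 3) ≤ Δ := by
    simp only [hF, ← hs, getVert_length, closerDegree_self, one_mul]
    exact (closerDegree_le_degree (by rw [dist_comm]; omega)).trans (hΔ y)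
  have hsecond : F 1 ≤ Δ - 1 := by
    obtain ⟨h1, h2⟩ := hdist 1 (by omega)
    exact (closerDegree_mul_closerDegree_le_pred_left (hgeod 1 (by omega)) h1
      (by omega)).trans (Nat.sub_le_sub_right (hΔ _) 1)
  have hpenultimate : F (s + 2) ≤ Δ - 1 := by
    obtain ⟨h1, h2⟩ := hdist (s + 2) (by omega)
    exact (closerDegree_mul_closerDegree_le_pred_right (hgeod (s + 2) (by omega)) (by omega)
      (by omega)).trans (Nat.sub_le_sub_right (hΔ _) 1)
  have hinterior : ∀ i ∈ range s, F (i + 2) ≤ Δ / 2 * ((Δ + 1) / 2) := by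
    intro i hi
    have := mem_range.1 hi
    obtain ⟨h1, h2⟩ := hdist (i + 2) (by omega)
    refine (closerDegree_mul_closerDegree_le (hgeod (i + 2) (by omega)) (by omega)
      (by omega)).trans ?_
    gcongr <;> exact hΔ _
  unfold descentWeight
  rw [← prod_mul_distrib, hs, prod_range_succ, prod_range_succ, prod_range_succ',
    prod_range_succ']
  calc (∏ i ∈ range s, F (i + 1 + 1)) * F (0 + 1) * F 0 * F (s + 2) * F (s + 3)
      ≤ (Δ / 2 * ((Δ + 1) / 2)) ^ s * (Δ - 1) * Δ * (Δ - 1) * Δ := by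
        gcongr
        simpa using prod_le_pow_card _ _ _ hinterior
    _ = Δ ^ 2 * (Δ - 1) ^ 2 * (Δ / 2 * ((Δ + 1) / 2)) ^ (s + 3 - 3) := by
        rw [Nat.add_sub_cancel]
        ring

section

variable [DecidableEq V]

theorem sum_neighborSet_ite_mem {R : Type*} [AddCommMonoidWithOne R] {t : Finset V}
    (ht : t ⊆ G.neighborFinset v) :
    ∑ w : G.neighborSet v, (if (w : V) ∈ t then (1 : R) else 0) = #t := by
  rw [Finset.sum_set_coe (f := fun w => if w ∈ t then 1 else 0), ← neighborFinset_def,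
    sum_ite_mem, Finset.inter_eq_right.2 ht]
  simp

theorem sum_finsetWalkLength_succ {M : Type*} [AddCommMonoid M] (n : ℕ) (f : G.Walk u v → M) :
    ∑ p ∈ G.finsetWalkLength (n + 1) u v, f p =
      ∑ w : G.neighborSet u, ∑ q ∈ G.finsetWalkLength n w v,
        f (q.cons ((G.mem_neighborSet u w).1 w.2)) := by
  rw [finsetWalkLength, sum_biUnion]
  · simp only [sum_map]
    rfl
  rintro ⟨w, hw⟩ - ⟨w', hw'⟩ - hne
  rw [Function.onFun, Finset.disjoint_left]
  intro p hp hp'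
  obtain ⟨q, -, rfl⟩ := mem_map.1 hp
  obtain ⟨q', -, hq⟩ := mem_map.1 hp'
  cases hq
  exact hne rfl

theorem sum_inv_descentWeight_le_one (u v : V) :
    ∑ p ∈ G.finsetWalkLength (G.dist v u) v u, ((p.descentWeight u : ℝ))⁻¹ ≤ 1 := by
  suffices ∀ s v, G.dist v u = s →
      ∑ p ∈ G.finsetWalkLength s v u, ((p.descentWeight u : ℝ))⁻¹ ≤ 1 from this _ v rfl
  intro s
  induction s with
  | zero =>
    intro v _
    unfold finsetWalkLength
    split_ifs with h
    · subst h
      simp [Walk.descentWeight, closerDegree_self]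
    · simp
  | succ s ih =>
    intro v hv
    have hinner : ∀ w : G.neighborSet v, ∑ q ∈ G.finsetWalkLength s w u,
        ((q.descentWeight u : ℝ))⁻¹ ≤ if (w : V) ∈ G.closerNeighborFinset u v then 1 else 0 := by
      intro w
      split_ifs with hcloser
      · exact ih w (by have := (mem_filter.1 hcloser).2; omega)
      exact (sum_eq_zero fun q hq => absurd (mem_closerNeighborFinset_of_walk w.2 q
        (by rw [mem_finsetWalkLength_iff.1 hq, hv])) hcloser).le
    have hcard : (#(G.closerNeighborFinset u v) : ℝ) ≤ G.closerDegree u v := by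
      exact_mod_cast le_max_right _ _
    calc ∑ p ∈ G.finsetWalkLength (s + 1) v u, ((p.descentWeight u : ℝ))⁻¹
        = ∑ w : G.neighborSet v, (G.closerDegree u v : ℝ)⁻¹ *
            ∑ q ∈ G.finsetWalkLength s w u, ((q.descentWeight u : ℝ))⁻¹ := by
          simp only [sum_finsetWalkLength_succ, Walk.descentWeight_cons, Nat.cast_mul, mul_inv,
            mul_sum]
      _ ≤ ∑ w : G.neighborSet v, (G.closerDegree u v : ℝ)⁻¹ *
            if (w : V) ∈ G.closerNeighborFinset u v then 1 else 0 := by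
          gcongr with w
          exact hinner w
      _ = (G.closerDegree u v : ℝ)⁻¹ * #(G.closerNeighborFinset u v) := by
          rw [← mul_sum]
          exact congrArg _ (sum_neighborSet_ite_mem closerNeighborFinset_subset_neighborFinset)
      _ ≤ 1 := inv_mul_le_one_of_le₀ hcard (by positivity)

theorem sum_inv_descentWeight_start_le_one (u v : V) :
    ∑ p ∈ G.finsetWalkLength (G.dist u v) u v, ((p.descentWeight u : ℝ))⁻¹ ≤ 1 := by
  calc ∑ p ∈ G.finsetWalkLength (G.dist u v) u v, ((p.descentWeight u : ℝ))⁻¹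
      = ∑ p ∈ G.finsetWalkLength (G.dist v u) v u, ((p.descentWeight u : ℝ))⁻¹ := by
        refine sum_nbij' Walk.reverse Walk.reverse ?_ ?_ (fun p _ => p.reverse_reverse)
          (fun p _ => p.reverse_reverse) (fun p _ => by rw [Walk.descentWeight_reverse])
        all_goals
          intro p hp
          simpa [mem_finsetWalkLength_iff, dist_comm] using hp
    _ ≤ 1 := sum_inv_descentWeight_le_one u v

end

end SimpleGraph

theorem simple_graph_shortest_paths_sq_le_general {V : Type} [Fintype V]
    (G : SimpleGraph V) (Δ : ℕ) [DecidableRel G.Adj]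
    (hΔ : ∀ v : V, G.degree v ≤ Δ)
    (x y : V) (t : ℕ) (ht : G.dist x y = t) (ht3 : 3 ≤ t) :
    Nat.card {p : G.Walk x y // p.length = t} ^ 2 ≤
      Δ ^ 2 * (Δ - 1) ^ 2 * ((Δ / 2) * ((Δ + 1) / 2)) ^ (t - 3) := by
  classical
  subst ht
  have hcard : Nat.card {p : G.Walk x y // p.length = G.dist x y} =
      #(G.finsetWalkLength (G.dist x y) x y) := by
    rw [← SimpleGraph.card_set_walk_length_eq, ← Nat.card_eq_fintype_card]
    rfl
  rw [hcard]
  refine Finset.card_sq_le_of_sum_inv_le_one (a := fun p => p.descentWeight y)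
    (b := fun p => p.descentWeight x) (SimpleGraph.sum_inv_descentWeight_le_one y x)
    (SimpleGraph.sum_inv_descentWeight_start_le_one x y)
    (fun p _ => Nat.mul_pos p.descentWeight_pos p.descentWeight_pos) fun p hp => ?_
  have hp := SimpleGraph.mem_finsetWalkLength_iff.1 hp
  simpa [hp] using p.descentWeight_mul_descentWeight_le hΔ hp (hp ▸ ht3)

/-- In a simple graph of maximum degree at most Δ ≥ 2, for
vertices at distance t ≥ 3, the number of shortest paths satisfies
n² ≤ Δ²(Δ-1)² · (⌊Δ/2⌋·⌈Δ/2⌉)^(t-3). -/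
theorem simple_graph_shortest_paths_sq_le {V : Type} [Fintype V]
    (G : SimpleGraph V) (Δ : ℕ) [DecidableRel G.Adj] (hΔ2 : 2 ≤ Δ)
    (hΔ : ∀ v : V, G.degree v ≤ Δ)
    (x y : V) (t : ℕ) (ht : G.dist x y = t) (ht3 : 3 ≤ t) :
    Nat.card {p : G.Walk x y // p.length = t} ^ 2 ≤
      Δ ^ 2 * (Δ - 1) ^ 2 * ((Δ / 2) * ((Δ + 1) / 2)) ^ (t - 3) :=
  simple_graph_shortest_paths_sq_le_general G Δ hΔ x y t ht ht3
end

section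
/- In any multigraph G, if P is a shortest path from x to y and v is an internal vertex of P, then no edge incident to v can simultaneously satisfy dist_G(x,e) < d_G(x,v) and dist_G(y,e) < d_G(y,v); in particular deg_x(v) + deg_y(v) ≤ deg(v) ≤ Δ when G has maximum degree Δ. -/
namespace Multigraph

variable {V E : Type} {G : Multigraph V E}

lemma Walk.vert_eq_of_val {x y : V} {n : ℕ} (w : G.Walk x y n) {i j : Fin (n + 1)}
    (h : (i : ℕ) = (j : ℕ)) : w.vert i = w.vert j := by
  congr 1
  exact Fin.ext h

lemma Walk.vert_last' {x y : V} {n : ℕ} (w : G.Walk x y n) {i : Fin (n + 1)}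
    (h : (i : ℕ) = n) : w.vert i = y := by
  rw [w.vert_eq_of_val (j := Fin.last n) (by simpa using h)]
  exact w.vert_last

lemma Walk.vert_zero' {x y : V} {n : ℕ} (w : G.Walk x y n) {i : Fin (n + 1)}
    (h : (i : ℕ) = 0) : w.vert i = x := by
  rw [w.vert_eq_of_val (j := 0) (by simpa using h)]
  exact w.vert_zero

/-- Reverse of a walk. -/
noncomputable def Walk.reverse {x y : V} {n : ℕ} (w : G.Walk x y n) : G.Walk y x n where
  vert i := w.vert ⟨n - (i : ℕ), by omega⟩
  edge i := w.edge ⟨n - 1 - (i : ℕ), by omega⟩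
  vert_zero := by
    exact w.vert_last' (by simp)
  vert_last := by
    exact w.vert_zero' (by simp)
  ends_eq i := by
    have hi := i.isLt
    rw [w.ends_eq ⟨n - 1 - (i : ℕ), by omega⟩, Sym2.eq_swap]
    have e1 : w.vert (Fin.succ ⟨n - 1 - (i : ℕ), by omega⟩) =
        w.vert ⟨n - (i.castSucc : ℕ), by omega⟩ :=
      w.vert_eq_of_val (by simp; omega)
    have e2 : w.vert (Fin.castSucc ⟨n - 1 - (i : ℕ), by omega⟩) =
        w.vert ⟨n - (i.succ : ℕ), by omega⟩ :=
      w.vert_eq_of_val (by simp; omega)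
    rw [e1, e2]

/-- Concatenation of walks. -/
noncomputable def Walk.append {x u y : V} {m k : ℕ} (w1 : G.Walk x u m) (w2 : G.Walk u y k) :
    G.Walk x y (m + k) where
  vert i := if h : (i : ℕ) ≤ m then w1.vert ⟨i, by omega⟩ else w2.vert ⟨(i : ℕ) - m, by omega⟩
  edge i := if h : (i : ℕ) < m then w1.edge ⟨i, h⟩ else w2.edge ⟨(i : ℕ) - m, by omega⟩
  vert_zero := by
    rw [dif_pos (by simp)]
    exact w1.vert_zero' (by simp)
  vert_last := by
    by_cases h : k = 0
    · subst h
      rw [dif_pos (by simp)]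
      have h2 : w2.vert (Fin.last 0) = u := by
        rw [show Fin.last 0 = 0 from rfl]; exact w2.vert_zero
      rw [w1.vert_last' (by simp), ← h2, w2.vert_last]
    · rw [dif_neg (by simp; omega)]
      exact w2.vert_last' (by simp)
  ends_eq i := by
    have hik := i.isLt
    by_cases h : (i : ℕ) < m
    · rw [dif_pos h]
      rw [dif_pos (show ((i.castSucc : Fin (m + k + 1)) : ℕ) ≤ m by simp; omega)]
      rw [dif_pos (show ((i.succ : Fin (m + k + 1)) : ℕ) ≤ m by simp; omega)]
      rw [w1.ends_eq ⟨i, h⟩]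
      have e1 : w1.vert (Fin.castSucc ⟨(i : ℕ), h⟩) =
          w1.vert ⟨((i.castSucc : Fin (m + k + 1)) : ℕ), by simp; omega⟩ :=
        w1.vert_eq_of_val (by simp)
      have e2 : w1.vert (Fin.succ ⟨(i : ℕ), h⟩) =
          w1.vert ⟨((i.succ : Fin (m + k + 1)) : ℕ), by simp; omega⟩ :=
        w1.vert_eq_of_val (by simp)
      rw [e1, e2]
    · rw [dif_neg h]
      rw [dif_neg (show ¬ ((i.succ : Fin (m + k + 1)) : ℕ) ≤ m by simp; omega)]
      rw [w2.ends_eq ⟨(i : ℕ) - m, by omega⟩]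
      have e2 : w2.vert (Fin.succ ⟨(i : ℕ) - m, by omega⟩) =
          w2.vert ⟨((i.succ : Fin (m + k + 1)) : ℕ) - m, by simp; omega⟩ :=
        w2.vert_eq_of_val (by simp; omega)
      rw [e2]
      by_cases hm : (i : ℕ) = m
      · rw [dif_pos (show ((i.castSucc : Fin (m + k + 1)) : ℕ) ≤ m by simp; omega)]
        have e1 : w2.vert (Fin.castSucc ⟨(i : ℕ) - m, by omega⟩) = u :=
          w2.vert_zero' (by simp; omega)
        have e1' : w1.vert ⟨((i.castSucc : Fin (m + k + 1)) : ℕ), by simp; omega⟩ = u :=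
          w1.vert_last' (by simp; omega)
        rw [e1, e1']
      · rw [dif_neg (show ¬ ((i.castSucc : Fin (m + k + 1)) : ℕ) ≤ m by simp; omega)]
        have e1 : w2.vert (Fin.castSucc ⟨(i : ℕ) - m, by omega⟩) =
            w2.vert ⟨((i.castSucc : Fin (m + k + 1)) : ℕ) - m, by simp; omega⟩ :=
          w2.vert_eq_of_val (by simp)
        rw [e1]

/-- Prefix of a walk. -/
noncomputable def Walk.take {x y : V} {n : ℕ} (w : G.Walk x y n) (m : ℕ) (hm : m ≤ n) :
    G.Walk x (w.vert ⟨m, by omega⟩) m where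
  vert i := w.vert ⟨i, by omega⟩
  edge i := w.edge ⟨i, by omega⟩
  vert_zero := by
    exact w.vert_zero' (by simp)
  vert_last := rfl
  ends_eq i := by
    rw [w.ends_eq ⟨i, by omega⟩]
    have e1 : w.vert (Fin.castSucc ⟨(i : ℕ), by omega⟩) =
        w.vert ⟨((i.castSucc : Fin (m + 1)) : ℕ), by have := i.isLt; simp; omega⟩ :=
      w.vert_eq_of_val (by simp)
    have e2 : w.vert (Fin.succ ⟨(i : ℕ), by omega⟩) =
        w.vert ⟨((i.succ : Fin (m + 1)) : ℕ), by have := i.isLt; simp; omega⟩ :=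
      w.vert_eq_of_val (by simp)
    rw [e1, e2]

/-- Suffix of a walk. -/
noncomputable def Walk.drop {x y : V} {n : ℕ} (w : G.Walk x y n) (m : ℕ) (hm : m ≤ n) :
    G.Walk (w.vert ⟨m, by omega⟩) y (n - m) where
  vert i := w.vert ⟨m + i, by omega⟩
  edge i := w.edge ⟨m + i, by omega⟩
  vert_zero := by
    exact w.vert_eq_of_val (by simp)
  vert_last := by
    exact w.vert_last' (by simp; omega)
  ends_eq i := by
    have hik := i.isLt
    rw [w.ends_eq ⟨m + i, by omega⟩]
    have e1 : w.vert (Fin.castSucc ⟨m + (i : ℕ), by omega⟩) =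
        w.vert ⟨m + ((i.castSucc : Fin (n - m + 1)) : ℕ), by simp; omega⟩ :=
      w.vert_eq_of_val (by simp)
    have e2 : w.vert (Fin.succ ⟨m + (i : ℕ), by omega⟩) =
        w.vert ⟨m + ((i.succ : Fin (n - m + 1)) : ℕ), by simp; omega⟩ :=
      w.vert_eq_of_val (by simp; omega)
    rw [e1, e2]

/-- A single edge gives a walk of length one. -/
noncomputable def Walk.ofEdge {a b : V} (e : E) (he : G.ends e = s(a, b)) : G.Walk a b 1 where
  vert i := if i = 0 then a else b
  edge _ := e
  vert_zero := rfl
  vert_last := rfl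
  ends_eq i := by
    have : i = 0 := Subsingleton.elim _ _
    subst this
    simpa using he

lemma dist_le {x y : V} {n : ℕ} (h : Nonempty (G.Walk x y n)) : G.dist x y ≤ n :=
  Nat.sInf_le h

lemma exists_walk_dist {x y : V} {n : ℕ} (h : Nonempty (G.Walk x y n)) :
    Nonempty (G.Walk x y (G.dist x y)) :=
  Nat.sInf_mem (⟨n, h⟩ : Set.Nonempty {n | Nonempty (G.Walk x y n)})

end Multigraph

/-- If v is an internal vertex of a shortest x–y path, then no
edge incident to v is simultaneously strictly closer to x than v and strictly
closer to y than v; in particular deg_x(v) + deg_y(v) ≤ deg(v) ≤ Δ when the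
maximum degree is at most Δ. -/
theorem no_edge_closer_to_both {V E : Type} [Fintype V] [Fintype E]
    (G : Multigraph V E) (Δ : ℕ) (hΔ : ∀ u : V, G.degree u ≤ Δ)
    (x y v : V)
    (hv : ∃ (w : G.Walk x y (G.dist x y)) (i : Fin (G.dist x y + 1)),
      w.vert i = v ∧ i ≠ 0 ∧ i ≠ Fin.last _) :
    (∀ e : E, v ∈ G.ends e →
        ¬(G.distToEdge x e < G.dist x v ∧ G.distToEdge y e < G.dist y v)) ∧
      Nat.card {e : E // v ∈ G.ends e ∧ G.distToEdge x e < G.dist x v} +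
        Nat.card {e : E // v ∈ G.ends e ∧ G.distToEdge y e < G.dist y v} ≤
          G.degree v ∧
      G.degree v ≤ Δ := by
  classical
  set n := G.dist x y with hn
  obtain ⟨w, i, hvi, hi0, hilast⟩ := hv
  have hi1 : 1 ≤ (i : ℕ) := Nat.pos_of_ne_zero (fun h => hi0 (Fin.ext h))
  have hiLt := i.isLt
  have hin : (i : ℕ) < n := by
    have : (i : ℕ) ≠ n := fun h => hilast (Fin.ext (by simpa using h))
    omega
  have hvi' : w.vert ⟨(i : ℕ), i.isLt⟩ = v := by rw [← hvi]
  have wxv : Nonempty (G.Walk x v (i : ℕ)) := by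
    rw [← hvi']
    exact ⟨w.take (i : ℕ) (by omega)⟩
  have wvy : Nonempty (G.Walk v y (n - (i : ℕ))) := by
    rw [← hvi']
    exact ⟨w.drop (i : ℕ) (by omega)⟩
  have hdxv : G.dist x v ≤ (i : ℕ) := Multigraph.dist_le wxv
  have hdyv : G.dist y v ≤ n - (i : ℕ) :=
    Multigraph.dist_le ⟨(Classical.choice wvy).reverse⟩
  have key : ∀ e : E, v ∈ G.ends e →
      ¬(G.distToEdge x e < G.dist x v ∧ G.distToEdge y e < G.dist y v) := by
    rintro e hve ⟨hex, hey⟩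
    set w' := Sym2.Mem.other hve with hw'
    have hsp : G.ends e = s(v, w') := (Sym2.other_spec hve).symm
    -- the closest endpoint to x
    have hSx : G.distToEdge x e ∈ {d | ∃ u ∈ G.ends e, G.dist x u = d} :=
      Nat.sInf_mem ⟨G.dist x v, ⟨v, hve, rfl⟩⟩
    obtain ⟨u, hu, hud⟩ := hSx
    have hxu : G.dist x u < G.dist x v := by rw [hud]; exact hex
    have hxw : G.dist x w' < G.dist x v := by
      rw [hsp, Sym2.mem_iff] at hu
      rcases hu with rfl | rfl
      · omega
      · exact hxu
    -- the closest endpoint to y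
    have hSy : G.distToEdge y e ∈ {d | ∃ u ∈ G.ends e, G.dist y u = d} :=
      Nat.sInf_mem ⟨G.dist y v, ⟨v, hve, rfl⟩⟩
    obtain ⟨u', hu', hud'⟩ := hSy
    have hyu : G.dist y u' < G.dist y v := by rw [hud']; exact hey
    have hyw : G.dist y w' < G.dist y v := by
      rw [hsp, Sym2.mem_iff] at hu'
      rcases hu' with rfl | rfl
      · omega
      · exact hyu
    -- build walks witnessing the short detour
    have wvw : G.Walk v w' 1 := Multigraph.Walk.ofEdge e hsp
    have wxw : Nonempty (G.Walk x w' ((i : ℕ) + 1)) :=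
      ⟨(Classical.choice wxv).append wvw⟩
    have wxwd : Nonempty (G.Walk x w' (G.dist x w')) := Multigraph.exists_walk_dist wxw
    have wyw : Nonempty (G.Walk y w' ((n - (i : ℕ)) + 1)) :=
      ⟨((Classical.choice wvy).reverse).append wvw⟩
    have wywd : Nonempty (G.Walk y w' (G.dist y w')) := Multigraph.exists_walk_dist wyw
    have wxy : Nonempty (G.Walk x y (G.dist x w' + G.dist y w')) :=
      ⟨(Classical.choice wxwd).append (Classical.choice wywd).reverse⟩
    have hxy : G.dist x y ≤ G.dist x w' + G.dist y w' := Multigraph.dist_le wxy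
    omega
  refine ⟨key, ?_, hΔ v⟩
  set P : E → Prop := fun e => v ∈ G.ends e ∧ G.distToEdge x e < G.dist x v with hP
  set Q : E → Prop := fun e => v ∈ G.ends e ∧ G.distToEdge y e < G.dist y v with hQ
  have hf : Function.Injective
      (Sum.elim (fun e : {e : E // P e} => (⟨e.1, e.2.1⟩ : {e : E // v ∈ G.ends e}))
        (fun e : {e : E // Q e} => (⟨e.1, e.2.1⟩ : {e : E // v ∈ G.ends e}))) := by
    rintro (⟨a, ha⟩ | ⟨a, ha⟩) (⟨b, hb⟩ | ⟨b, hb⟩) hab <;>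
      simp only [Sum.elim_inl, Sum.elim_inr, Subtype.mk.injEq] at hab
    · subst hab; rfl
    · subst hab; exact absurd ⟨ha.2, hb.2⟩ (key a ha.1)
    · subst hab; exact absurd ⟨hb.2, ha.2⟩ (key a hb.1)
    · subst hab; rfl
  have hcard := Nat.card_le_card_of_injective _ hf
  rw [Nat.card_sum] at hcard
  exact hcard
end
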